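/- arXiv:1901.02254 — 2 statements merged into one kernel-verified Lean document; each statement's English description precedes it below -/
import Mathlib

section
/- In the discrete-time EbDO evaluation problem with n maturity dates, if (X_i, Y_i, X'_i)_{i=0,...,n} is a solution (i.e., the processes are nonnegative, adapted, X_i = X'_{i-1}·Z_i, X'_i = X_i − h_i(Y_i), Y is a martingale, Y_n = X'_n, X'_0 = X_0), then X'_i = f_i⁻¹(Y_i) for all i ∈ {1,...,n}, where f_n = Id and f_{i-1}(x) := E[(f_i⁻¹ + h_i)⁻¹(x·Z_i)]. -/
open Set MeasureTheory ProbabilityTheory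

/-!
Backward induction from `X'_n = Y_n`. If `X'_{i+1} = f_{i+1}⁻¹(Y_{i+1})`, then
`X'_i Z_{i+1} = X_{i+1} = (f_{i+1}⁻¹ + h_{i+1})(Y_{i+1})`, so `Y_{i+1} = g_{i+1}(X'_i Z_{i+1})`.
Since `X'_i` is `ℱ_i`-measurable and `Z_{i+1}` is independent of `ℱ_i`, the freezing lemma
`𝔼[ψ(W, ζ) | ℱ_i](ω) = 𝔼[ψ(W ω, ζ)]` turns the martingale property into
`Y_i = 𝔼[g_{i+1}(X'_i Z_{i+1}) | ℱ_i] = f_i(X'_i)`, that is `X'_i = f_i⁻¹(Y_i)`.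
-/

theorem MonotoneOn.strictMonoOn_of_rightInvOn {α β : Type*} [LinearOrder α] [Preorder β]
    {k : α → β} {g : β → α} {s : Set α} {t : Set β} (hk : MonotoneOn k s) (hg : MapsTo g t s)
    (hinv : RightInvOn g k t) : StrictMonoOn g t := by
  intro x hx y hy hxy
  by_contra! hle
  have hyx := hk (hg hy) (hg hx) hle
  rw [hinv hx, hinv hy] at hyx
  exact hxy.not_ge hyx

theorem MonotoneOn.measurable_comp_max {g : ℝ → ℝ} {a : ℝ} (hg : MonotoneOn g (Ici a)) :
    Measurable fun t => g (max t a) :=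
  Monotone.measurable fun x y hxy =>
    hg (le_max_right x a) (le_max_right y a) (max_le_max hxy le_rfl)

namespace ProbabilityTheory

variable {Ω α β E : Type*} {m mΩ : MeasurableSpace Ω} {mα : MeasurableSpace α}
  {mβ : MeasurableSpace β} [NormedAddCommGroup E] [NormedSpace ℝ E]
  {P : Measure Ω} {V : Ω → α} {ζ : Ω → β} {ψ : α × β → E}

theorem integral_map_comp_prodMk_left (hζ : Measurable ζ) (hψ : StronglyMeasurable ψ) (a : α) :
    ∫ z, ψ (a, z) ∂(P.map ζ) = ∫ ω, ψ (a, ζ ω) ∂P :=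
  integral_map hζ.aemeasurable (hψ.comp_measurable measurable_prodMk_left).aestronglyMeasurable

theorem Indep.indepFun_of_measurable (hind : Indep m (mβ.comap ζ) P) (hV : Measurable[m] V) :
    IndepFun V ζ P := by
  rw [IndepFun_iff_Indep]
  exact indep_of_indep_of_le_left hind hV.comap_le

theorem iIndepFun.indep_iSup_comap_of_notMem {ι : Type*}
    {Z : ι → Ω → β} (hZ_meas : ∀ i, Measurable (Z i)) (hZ : iIndepFun Z P) {S : Finset ι}
    {k : ι} (hk : k ∉ S) : Indep (⨆ j ∈ S, mβ.comap (Z j)) (mβ.comap (Z k)) P := by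
  simpa using indep_iSup_of_disjoint (fun j => (hZ_meas j).comap_le) hZ.iIndep
    (S := (S : Set ι)) (T := {k}) (by simpa using hk)

variable [IsFiniteMeasure P]

omit [NormedSpace ℝ E] in
theorem IndepFun.integrable_map_prod (hVζ : IndepFun V ζ P) (hV : Measurable V)
    (hζ : Measurable ζ) (hψ : StronglyMeasurable ψ)
    (hint : Integrable (fun ω => ψ (V ω, ζ ω)) P) :
    Integrable ψ ((P.map V).prod (P.map ζ)) := by
  rwa [← (indepFun_iff_map_prod_eq_prod_map_map hV.aemeasurable hζ.aemeasurable).mp hVζ,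
    integrable_map_measure hψ.aestronglyMeasurable (hV.prodMk hζ).aemeasurable]

theorem IndepFun.integrable_integral_comp_prodMk (hVζ : IndepFun V ζ P)
    (hV : Measurable V) (hζ : Measurable ζ) (hψ : StronglyMeasurable ψ)
    (hint : Integrable (fun ω => ψ (V ω, ζ ω)) P) :
    Integrable (fun ω => ∫ ω', ψ (V ω, ζ ω') ∂P) P := by
  have h := (hVζ.integrable_map_prod hV hζ hψ hint).integral_prod_left
  rw [integrable_map_measure hψ.integral_prod_right'.aestronglyMeasurable hV.aemeasurable] at h
  simpa only [Function.comp_def, integral_map_comp_prodMk_left hζ hψ] using h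

theorem IndepFun.integral_comp_prodMk (hVζ : IndepFun V ζ P)
    (hV : Measurable V) (hζ : Measurable ζ) (hψ : StronglyMeasurable ψ)
    (hint : Integrable (fun ω => ψ (V ω, ζ ω)) P) :
    ∫ ω, ψ (V ω, ζ ω) ∂P = ∫ ω, ∫ ω', ψ (V ω, ζ ω') ∂P ∂P := by
  rw [← integral_map (hV.prodMk hζ).aemeasurable hψ.aestronglyMeasurable,
    (indepFun_iff_map_prod_eq_prod_map_map hV.aemeasurable hζ.aemeasurable).mp hVζ,
    integral_prod ψ (hVζ.integrable_map_prod hV hζ hψ hint),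
    integral_map hV.aemeasurable hψ.integral_prod_right'.aestronglyMeasurable]
  simp only [integral_map_comp_prodMk_left hζ hψ]

theorem condExp_comp_prodMk_ae_eq_integral [CompleteSpace E] (hm : m ≤ mΩ) {W : Ω → α}
    (hW : Measurable[m] W) (hζ : Measurable ζ) (hind : Indep m (mβ.comap ζ) P)
    (hψ : StronglyMeasurable ψ) (hint : Integrable (fun ω => ψ (W ω, ζ ω)) P) :
    P[fun ω => ψ (W ω, ζ ω) | m] =ᵐ[P] fun ω => ∫ ω', ψ (W ω, ζ ω') ∂P := by
  have hW₀ : Measurable W := hW.mono hm le_rfl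
  have hfrozen : StronglyMeasurable[m] fun ω => ∫ ω', ψ (W ω, ζ ω') ∂P := by
    simpa only [Function.comp_def, integral_map_comp_prodMk_left hζ hψ]
      using (hψ.integral_prod_right' (ν := P.map ζ)).comp_measurable hW
  refine (ae_eq_condExp_of_forall_setIntegral_eq hm hint (fun s _ _ => ?_) (fun s hs _ => ?_)
    hfrozen.aestronglyMeasurable).symm
  · exact ((hind.indepFun_of_measurable hW).integrable_integral_comp_prodMk hW₀ hζ hψ
      hint).integrableOn
  -- Integrating over `s` amounts to freezing the `m`-measurable pair `(W, 1_s)` against `ζ`.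
  have hB : Measurable[m] (s.indicator (1 : Ω → ℝ)) := (@measurable_one ℝ Ω _ m _).indicator hs
  have hB_smul (F : Ω → E) : (fun ω => s.indicator (1 : Ω → ℝ) ω • F ω) = s.indicator F := by
    ext ω
    rw [← indicator_smul_apply_left]
    simp
  have hψB : StronglyMeasurable fun p : (α × ℝ) × β => p.1.2 • ψ (p.1.1, p.2) :=
    (measurable_snd.comp measurable_fst).stronglyMeasurable.smul
      (hψ.comp_measurable ((measurable_fst.comp measurable_fst).prodMk measurable_snd))
  have key := (hind.indepFun_of_measurable (hW.prodMk hB)).integral_comp_prodMk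
    (hW₀.prodMk (hB.mono hm le_rfl)) hζ hψB ?_
  · simp only [integral_smul, hB_smul, integral_indicator (hm s hs)] at key
    exact key.symm
  · simpa only [hB_smul] using hint.indicator (hm s hs)

theorem ae_eq_leftInvOn_of_ae_eq_condExp_comp_mul (hm : m ≤ mΩ) {W ζ Y : Ω → ℝ}
    {g f finv : ℝ → ℝ} (hW : Measurable[m] W) (hW_nonneg : ∀ᵐ ω ∂P, 0 ≤ W ω)
    (hζ : Measurable ζ) (hζ_pos : ∀ᵐ ω ∂P, 0 < ζ ω)
    (hind : Indep m (MeasurableSpace.comap ζ inferInstance) P) (hg : MonotoneOn g (Ici 0))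
    (hint : Integrable (fun ω => g (W ω * ζ ω)) P)
    (hf : ∀ x ∈ Ici (0 : ℝ), f x = ∫ ω, g (x * ζ ω) ∂P) (hfinv : LeftInvOn finv f (Ici 0))
    (hY : Y =ᵐ[P] P[fun ω => g (W ω * ζ ω) | m]) :
    W =ᵐ[P] fun ω => finv (Y ω) := by
  -- `g` is only controlled on `[0, ∞)`; `ψ` is a measurable version agreeing with it there.
  set ψ : ℝ × ℝ → ℝ := fun p => g (max (p.1 * p.2) 0)
  have hψ : StronglyMeasurable ψ :=
    (hg.measurable_comp_max.comp (measurable_fst.mul measurable_snd)).stronglyMeasurable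
  have hψ_eq {x : ℝ} (hx : 0 ≤ x) : (fun ω => g (x * ζ ω)) =ᵐ[P] fun ω => ψ (x, ζ ω) := by
    filter_upwards [hζ_pos] with ω hζω
    simp [ψ, max_eq_left (mul_nonneg hx hζω.le)]
  have hgψ : (fun ω => g (W ω * ζ ω)) =ᵐ[P] fun ω => ψ (W ω, ζ ω) := by
    filter_upwards [hW_nonneg, hζ_pos] with ω hWω hζω
    simp [ψ, max_eq_left (mul_nonneg hWω hζω.le)]
  have hYf : Y =ᵐ[P] fun ω => f (W ω) := by
    filter_upwards [hY.trans ((condExp_congr_ae hgψ).trans (condExp_comp_prodMk_ae_eq_integral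
      hm hW hζ hind hψ (hint.congr hgψ))), hW_nonneg] with ω hYω hWω
    rw [hYω, hf _ hWω]
    exact integral_congr_ae (hψ_eq hWω) |>.symm
  filter_upwards [hYf, hW_nonneg] with ω hYω hWω
  rw [hYω, hfinv hWω]

end ProbabilityTheory

theorem ebdo_stmt5_general
    {Ω : Type*} [mΩ : MeasurableSpace Ω] (P : Measure Ω) [IsProbabilityMeasure P]
    (n : ℕ)
    (Z : ℕ → Ω → ℝ) (h f finv g : ℕ → ℝ → ℝ)
    (ℱ : Filtration ℕ mΩ)
    -- the Z_i are independent, positive, integrable, mean 1 (e.g. lognormal):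
    (hZ_meas : ∀ i, Measurable (Z i))
    (hZ_pos : ∀ i, ∀ᵐ ω ∂P, 0 < Z i ω)
    (hZ_indep : iIndepFun Z P)
    -- the filtration is generated by the Z_j, j ≤ i:
    (hℱ : ∀ i, (ℱ i : MeasurableSpace Ω)
      = ⨆ j ∈ Finset.Icc 1 i, MeasurableSpace.comap (Z j) inferInstance)
    -- the payoff functions h_i:
    (hh_mono : ∀ i, MonotoneOn (h i) (Ici 0))
    -- the functions f_i are strictly increasing bijections of [0,∞), f_n = Id:
    (hfn : ∀ y : ℝ, f n y = y)
    (hf_mono : ∀ i, StrictMonoOn (f i) (Ici 0))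
    (hfinv_map : ∀ i, ∀ x ∈ Ici (0:ℝ), finv i x ∈ Ici (0:ℝ))
    (hfinv_left : ∀ i, ∀ y ∈ Ici (0:ℝ), finv i (f i y) = y)
    (hfinv_right : ∀ i, ∀ x ∈ Ici (0:ℝ), f i (finv i x) = x)
    -- g_i is the inverse of finv_i + h_i on [0,∞):
    (hg_map : ∀ i, ∀ x ∈ Ici (0:ℝ), g i x ∈ Ici (0:ℝ))
    (hg_left : ∀ i, ∀ y ∈ Ici (0:ℝ), g i (finv i y + h i y) = y)
    (hg_right : ∀ i, ∀ x ∈ Ici (0:ℝ), finv i (g i x) + h i (g i x) = x)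
    -- the backward recursion f_{i-1}(x) = E[(f_i⁻¹ + h_i)⁻¹(x·Z_i)]:
    (hrec : ∀ i, 1 ≤ i → i ≤ n → ∀ x ∈ Ici (0:ℝ),
      f (i - 1) x = ∫ ω, g i (x * Z i ω) ∂P)
    -- the solution processes:
    (X Y X' : ℕ → Ω → ℝ)
    (h_nonneg : ∀ i ≤ n, ∀ᵐ ω ∂P, 0 ≤ X i ω ∧ 0 ≤ Y i ω ∧ 0 ≤ X' i ω)
    (h_adapted : ∀ i ≤ n, StronglyMeasurable[ℱ i] (X i) ∧
      StronglyMeasurable[ℱ i] (Y i) ∧ StronglyMeasurable[ℱ i] (X' i))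
    (hXrec : ∀ i, 1 ≤ i → i ≤ n → ∀ᵐ ω ∂P, X i ω = X' (i - 1) ω * Z i ω)
    (hX'rec : ∀ i, 1 ≤ i → i ≤ n → ∀ᵐ ω ∂P, X' i ω = X i ω - h i (Y i ω))
    (hY_int : ∀ i ≤ n, Integrable (Y i) P)
    (hY_mart : ∀ i j, i ≤ j → j ≤ n → P[Y j|ℱ i] =ᵐ[P] Y i)
    (h_term : ∀ᵐ ω ∂P, Y n ω = X' n ω) :
    ∀ i, 1 ≤ i → i ≤ n → ∀ᵐ ω ∂P, X' i ω = finv i (Y i ω) := by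
  have hfinv_mono (i : ℕ) : MonotoneOn (finv i) (Ici 0) :=
    ((hf_mono i).monotoneOn.strictMonoOn_of_rightInvOn (hfinv_map i) (hfinv_right i)).monotoneOn
  have hg_mono (i : ℕ) : MonotoneOn (g i) (Ici 0) :=
    (((hfinv_mono i).add (hh_mono i)).strictMonoOn_of_rightInvOn (hg_map i)
      (hg_right i)).monotoneOn
  rintro i - hin
  induction hin using Nat.decreasingInduction with
  | self =>
    filter_upwards [h_term, h_nonneg n le_rfl] with ω hω hnn
    have hfinv_n := hfinv_left n _ hnn.2.1
    rw [hfn] at hfinv_n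
    rw [hfinv_n, hω]
  | of_succ j hjn ih =>
    have hY_succ : Y (j + 1) =ᵐ[P] fun ω => g (j + 1) (X' j ω * Z (j + 1) ω) := by
      filter_upwards [ih, hXrec (j + 1) (by omega) hjn, hX'rec (j + 1) (by omega) hjn,
        h_nonneg (j + 1) hjn] with ω hX'ω hXω hX'Xω hnn
      rw [Nat.add_sub_cancel] at hXω
      rw [← hXω, show X (j + 1) ω = X' (j + 1) ω + h (j + 1) (Y (j + 1) ω) by linarith, hX'ω,
        hg_left _ _ hnn.2.1]
    have hrec_j : ∀ x ∈ Ici (0 : ℝ), f j x = ∫ ω, g (j + 1) (x * Z (j + 1) ω) ∂P := by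
      simpa using hrec (j + 1) (by omega) hjn
    refine ae_eq_leftInvOn_of_ae_eq_condExp_comp_mul (ℱ.le j) (h_adapted j hjn.le).2.2.measurable
      ((h_nonneg j hjn.le).mono fun ω hω => hω.2.2) (hZ_meas _) (hZ_pos _) ?_ (hg_mono _)
      ((hY_int _ hjn).congr hY_succ) hrec_j (hfinv_left j)
      ((hY_mart j (j + 1) j.le_succ hjn).symm.trans (condExp_congr_ae hY_succ))
    rw [hℱ j]
    exact hZ_indep.indep_iSup_comap_of_notMem hZ_meas (by simp)

/-- In the discrete-time EbDO evaluation problem, any solution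
(X, Y, X') satisfies X'_i = f_i⁻¹(Y_i) for all i ∈ {1,...,n}, where f_n = Id and
f_{i-1}(x) = E[(f_i⁻¹ + h_i)⁻¹(x·Z_i)].  Here `finv i` is the inverse of `f i` on
[0,∞) and `g i` is the inverse of `finv i + h i` on [0,∞). -/
theorem ebdo_stmt5
    {Ω : Type*} [mΩ : MeasurableSpace Ω] (P : Measure Ω) [IsProbabilityMeasure P]
    (n : ℕ) (hn : 0 < n)
    (Z : ℕ → Ω → ℝ) (h f finv g : ℕ → ℝ → ℝ)
    (ℱ : Filtration ℕ mΩ)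
    -- the Z_i are independent, positive, integrable, mean 1 (e.g. lognormal):
    (hZ_meas : ∀ i, Measurable (Z i))
    (hZ_pos : ∀ i, ∀ᵐ ω ∂P, 0 < Z i ω)
    (hZ_int : ∀ i, Integrable (Z i) P)
    (hZ_mean : ∀ i, ∫ ω, Z i ω ∂P = 1)
    (hZ_indep : iIndepFun Z P)
    -- the filtration is generated by the Z_j, j ≤ i:
    (hℱ : ∀ i, (ℱ i : MeasurableSpace Ω)
      = ⨆ j ∈ Finset.Icc 1 i, MeasurableSpace.comap (Z j) inferInstance)
    -- the payoff functions h_i: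
    (hh_mono : ∀ i, MonotoneOn (h i) (Ici 0))
    (hh_map : ∀ i, ∀ y ∈ Ici (0:ℝ), h i y ∈ Ici (0:ℝ))
    (hh0 : ∀ i, h i 0 = 0)
    -- the functions f_i are strictly increasing bijections of [0,∞), f_n = Id:
    (hfn : ∀ y : ℝ, f n y = y)
    (hf_mono : ∀ i, StrictMonoOn (f i) (Ici 0))
    (hf_map : ∀ i, ∀ y ∈ Ici (0:ℝ), f i y ∈ Ici (0:ℝ))
    (hf0 : ∀ i, f i 0 = 0)
    (hfinv_map : ∀ i, ∀ x ∈ Ici (0:ℝ), finv i x ∈ Ici (0:ℝ))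
    (hfinv_left : ∀ i, ∀ y ∈ Ici (0:ℝ), finv i (f i y) = y)
    (hfinv_right : ∀ i, ∀ x ∈ Ici (0:ℝ), f i (finv i x) = x)
    -- g_i is the inverse of finv_i + h_i on [0,∞):
    (hg_map : ∀ i, ∀ x ∈ Ici (0:ℝ), g i x ∈ Ici (0:ℝ))
    (hg_left : ∀ i, ∀ y ∈ Ici (0:ℝ), g i (finv i y + h i y) = y)
    (hg_right : ∀ i, ∀ x ∈ Ici (0:ℝ), finv i (g i x) + h i (g i x) = x)
    -- the backward recursion f_{i-1}(x) = E[(f_i⁻¹ + h_i)⁻¹(x·Z_i)]: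
    (hrec : ∀ i, 1 ≤ i → i ≤ n → ∀ x ∈ Ici (0:ℝ),
      f (i - 1) x = ∫ ω, g i (x * Z i ω) ∂P)
    -- the solution processes:
    (X Y X' : ℕ → Ω → ℝ) (x₀ : ℝ) (hx₀ : 0 ≤ x₀)
    (h_nonneg : ∀ i ≤ n, ∀ᵐ ω ∂P, 0 ≤ X i ω ∧ 0 ≤ Y i ω ∧ 0 ≤ X' i ω)
    (h_adapted : ∀ i ≤ n, StronglyMeasurable[ℱ i] (X i) ∧
      StronglyMeasurable[ℱ i] (Y i) ∧ StronglyMeasurable[ℱ i] (X' i))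
    (hXrec : ∀ i, 1 ≤ i → i ≤ n → ∀ᵐ ω ∂P, X i ω = X' (i - 1) ω * Z i ω)
    (hX'rec : ∀ i, 1 ≤ i → i ≤ n → ∀ᵐ ω ∂P, X' i ω = X i ω - h i (Y i ω))
    (hY_int : ∀ i ≤ n, Integrable (Y i) P)
    (hY_mart : ∀ i j, i ≤ j → j ≤ n → P[Y j|ℱ i] =ᵐ[P] Y i)
    (h_term : ∀ᵐ ω ∂P, Y n ω = X' n ω)
    (h_init : ∀ ω, X 0 ω = x₀ ∧ X' 0 ω = x₀) :
    ∀ i, 1 ≤ i → i ≤ n → ∀ᵐ ω ∂P, X' i ω = finv i (Y i ω) :=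
  ebdo_stmt5_general (mΩ := mΩ) P n Z h f finv g ℱ hZ_meas hZ_pos hZ_indep hℱ hh_mono hfn hf_mono
    hfinv_map hfinv_left hfinv_right hg_map hg_left hg_right hrec X Y X' h_nonneg h_adapted hXrec
    hX'rec hY_int hY_mart h_term
end

section
/- Let c ≥ 0, T > 0, and let V : [0,T] → ℝ be differentiable with V(T) = 1 and V'(t) = g(t)·V(t)² for a measurable function g with 0 ≤ g(t) ≤ c. Then exp(−cT) ≤ V(t) ≤ 1 for all t ∈ [0,T]. -/
/-!
Since `V' = g V² ≥ 0`, `V` is nondecreasing, so `V ≤ V T = 1`. Wherever moreover `V ≥ 0`, we get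
`V' = g V² ≤ g V ≤ c V`, so `e^{-ct} V(t)` is nonincreasing and `V(a) ≥ e^{-c(T-a)} > 0`. Applied at
the last point of `[0, T)` where `V ≤ 0`, this is a contradiction; hence `V > 0` on `[0, T]` and the
lower bound holds everywhere.
-/

open Set Real

theorem antitoneOn_exp_neg_mul_mul_of_hasDerivAt_le {f f' : ℝ → ℝ} {a b c : ℝ}
    (hf : ContinuousOn f (Icc a b)) (hf' : ∀ t ∈ Ioo a b, HasDerivAt f (f' t) t)
    (hle : ∀ t ∈ Ioo a b, f' t ≤ c * f t) :
    AntitoneOn (fun t => exp (-c * t) * f t) (Icc a b) := by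
  have hderiv : ∀ t ∈ Ioo a b, HasDerivAt (fun t => exp (-c * t) * f t)
      (exp (-c * t) * (f' t - c * f t)) t := fun t ht =>
    (((hasDerivAt_id' t).const_mul (-c)).exp.mul (hf' t ht)).congr_deriv (by ring)
  refine antitoneOn_of_hasDerivWithinAt_nonpos (f' := fun t => exp (-c * t) * (f' t - c * f t))
    (convex_Icc a b)
    ((continuous_const.mul continuous_id).rexp.continuousOn.mul hf) (fun t ht => ?_)
    fun t ht => ?_
  · rw [interior_Icc] at ht ⊢
    exact (hderiv t ht).hasDerivWithinAt
  · rw [interior_Icc] at ht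
    exact mul_nonpos_of_nonneg_of_nonpos (exp_pos _).le (sub_nonpos.mpr (hle t ht))

theorem mul_sq_le_mul_of_mem_Icc {g c v : ℝ} (hg : 0 ≤ g) (hgc : g ≤ c) (hv : v ∈ Icc 0 1) :
    g * v ^ 2 ≤ c * v :=
  calc g * v ^ 2 ≤ g * v := mul_le_mul_of_nonneg_left (by nlinarith [hv.1, hv.2]) hg
    _ ≤ c * v := mul_le_mul_of_nonneg_right hgc hv.1

theorem ContinuousOn.exists_last_nonpos {f : ℝ → ℝ} {a b t₀ : ℝ} (hf : ContinuousOn f (Icc a b))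
    (hb : 0 < f b) (ht₀ : t₀ ∈ Icc a b) (hft₀ : f t₀ ≤ 0) :
    ∃ s ∈ Ico a b, f s ≤ 0 ∧ ∀ t ∈ Ioc s b, 0 < f t := by
  have hclosed : IsClosed (Icc a b ∩ f ⁻¹' Iic 0) :=
    hf.preimage_isClosed_of_isClosed isClosed_Icc isClosed_Iic
  obtain ⟨s, ⟨hs, hfs⟩, hgreatest⟩ :=
    (isCompact_Icc.of_isClosed_subset hclosed inter_subset_left).exists_isGreatest ⟨t₀, ht₀, hft₀⟩
  have hsb : s ≠ b := by
    rintro rfl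
    exact (not_le.mpr hb) hfs
  refine ⟨s, ⟨hs.1, lt_of_le_of_ne hs.2 hsb⟩, hfs, fun t ht => not_le.mp fun hft => ?_⟩
  exact not_le.mpr ht.1 (hgreatest ⟨⟨hs.1.trans ht.1.le, ht.2⟩, hft⟩)

theorem monotoneOn_of_hasDerivAt_mul_sq {V g : ℝ → ℝ} {a b : ℝ}
    (hg : ∀ t ∈ Icc a b, 0 ≤ g t) (hV : ∀ t ∈ Icc a b, HasDerivAt V (g t * V t ^ 2) t) :
    MonotoneOn V (Icc a b) := by
  refine monotoneOn_of_hasDerivWithinAt_nonneg (f' := fun t => g t * V t ^ 2) (convex_Icc a b)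
    (fun t ht => (hV t ht).continuousAt.continuousWithinAt) (fun t ht => ?_) fun t ht => ?_
  · exact (hV t (interior_subset ht)).hasDerivWithinAt
  · exact mul_nonneg (hg t (interior_subset ht)) (sq_nonneg _)

theorem exp_neg_mul_mul_le_of_hasDerivAt_mul_sq {V g : ℝ → ℝ} {a b c : ℝ}
    (hg : ∀ t ∈ Icc a b, 0 ≤ g t ∧ g t ≤ c)
    (hV : ∀ t ∈ Icc a b, HasDerivAt V (g t * V t ^ 2) t)
    (hV_le : ∀ t ∈ Icc a b, V t ≤ 1) (hV_nonneg : ∀ t ∈ Ioo a b, 0 ≤ V t) (hab : a ≤ b) :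
    exp (-c * b) * V b ≤ exp (-c * a) * V a := by
  refine antitoneOn_exp_neg_mul_mul_of_hasDerivAt_le
    (fun t ht => (hV t ht).continuousAt.continuousWithinAt)
    (fun t ht => hV t (Ioo_subset_Icc_self ht)) (fun t ht => ?_)
    (left_mem_Icc.mpr hab) (right_mem_Icc.mpr hab) hab
  have ht' := Ioo_subset_Icc_self ht
  exact mul_sq_le_mul_of_mem_Icc (hg t ht').1 (hg t ht').2 ⟨hV_nonneg t ht, hV_le t ht'⟩

theorem riccati_bounds_general (c T : ℝ) (hc : 0 ≤ c)
    (V g : ℝ → ℝ)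
    (hg_bd : ∀ t ∈ Icc 0 T, 0 ≤ g t ∧ g t ≤ c)
    (hV : ∀ t ∈ Icc 0 T, HasDerivAt V (g t * V t ^ 2) t)
    (hVT : V T = 1) :
    ∀ t ∈ Icc 0 T, Real.exp (-c * T) ≤ V t ∧ V t ≤ 1 := by
  have hV_le : ∀ t ∈ Icc 0 T, V t ≤ 1 := fun t ht =>
    hVT ▸ monotoneOn_of_hasDerivAt_mul_sq (fun t ht => (hg_bd t ht).1) hV ht
      (right_mem_Icc.mpr (ht.1.trans ht.2)) ht.2
  have hlower : ∀ a ∈ Icc 0 T, (∀ t ∈ Ioo a T, 0 ≤ V t) → exp (-c * T) ≤ exp (-c * a) * V a :=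
    fun a ha hV_nonneg => by
      have hsub : Icc a T ⊆ Icc 0 T := Icc_subset_Icc_left ha.1
      simpa only [hVT, mul_one] using exp_neg_mul_mul_le_of_hasDerivAt_mul_sq
        (fun t ht => hg_bd t (hsub ht)) (fun t ht => hV t (hsub ht))
        (fun t ht => hV_le t (hsub ht)) hV_nonneg ha.2
  have hV_pos : ∀ t ∈ Icc 0 T, 0 < V t := by
    by_contra! ⟨t₀, ht₀, hVt₀⟩
    obtain ⟨s, hs, hVs, hpos⟩ := ContinuousOn.exists_last_nonpos
      (fun t ht => (hV t ht).continuousAt.continuousWithinAt) (hVT ▸ one_pos) ht₀ hVt₀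
    have := hlower s (Ico_subset_Icc_self hs) fun t ht => (hpos t (Ioo_subset_Ioc_self ht)).le
    nlinarith [exp_pos (-c * T), exp_pos (-c * s)]
  intro t ht
  refine ⟨?_, hV_le t ht⟩
  calc exp (-c * T) ≤ exp (-c * t) * V t :=
        hlower t ht fun u hu => (hV_pos u ⟨ht.1.trans hu.1.le, hu.2.le⟩).le
    _ ≤ V t := mul_le_of_le_one_left (hV_pos t ht).le (exp_le_one_iff.mpr (by nlinarith [ht.1]))

/-- If V : [0,T] → ℝ is differentiable with V(T) = 1 and
V'(t) = g(t)·V(t)² for measurable g with 0 ≤ g ≤ c, then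
exp(−cT) ≤ V(t) ≤ 1 on [0,T]. -/
theorem riccati_bounds (c T : ℝ) (hc : 0 ≤ c) (hT : 0 < T)
    (V g : ℝ → ℝ) (hg_meas : Measurable g)
    (hg_bd : ∀ t ∈ Icc 0 T, 0 ≤ g t ∧ g t ≤ c)
    (hV : ∀ t ∈ Icc 0 T, HasDerivAt V (g t * V t ^ 2) t)
    (hVT : V T = 1) :
    ∀ t ∈ Icc 0 T, Real.exp (-c * T) ≤ V t ∧ V t ≤ 1 :=
  riccati_bounds_general c T hc V g hg_bd hV hVT
end
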